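/- Let R be a unital ring, let N be a submodule of an R-module M, and let 𝒜 be a set of R-modules. For each A ∈ 𝒜 fix a short exact sequence 0 → K_A →^{ι_A} P_A → A → 0 of R-modules with P_A projective. Then N is a σ_𝒜-pure submodule of M if and only if for every A ∈ 𝒜 and every pair of R-module homomorphisms s : K_A → N and s' : P_A → M making the square with ι_A : K_A → P_A and the inclusion N → M commute (i.e. the inclusion composed with s equals s' composed with ι_A), there exists an R-module homomorphism r : P_A → N with r ∘ ι_A = s. -/

import Mathlib

/-!
By exactness of `K → P → A → 0`, maps out of `A` are the maps out of `P` that vanish on `K`.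
Given a square `(s, s')`, the map `P → M/N` induced by `s'` vanishes on `K`, so it is `g ∘ π`
for some `g : A → M/N`; if `g` lifts to `g' : A → M`, then `s' - g' ∘ π` lands in `N` and
restricts to `s` on `K`. Conversely, projectivity of `P` lifts `g ∘ π` to some `s' : P → M`,
whose restriction to `K` lands in `N`; a map `r` extending that restriction makes `s' - r`
vanish on `K`, so it descends to a lift of `g` along `M → M/N`.
-/

universe u v w x y z

open LinearMap

variable {R : Type*} [Ring R]
  {M : Type*} [AddCommGroup M] [Module R M] (N : Submodule R M)
  {K : Type*} [AddCommGroup K] [Module R K]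
  {P : Type*} [AddCommGroup P] [Module R P]
  {A : Type*} [AddCommGroup A] [Module R A]
  {X : Type*} [AddCommGroup X] [Module R X]

theorem Function.Exact.exists_comp_eq_of_comp_eq_zero {f : K →ₗ[R] P} {g : P →ₗ[R] A}
    (hfg : Function.Exact f g) (hg : Function.Surjective g) {h : P →ₗ[R] X} (hh : h ∘ₗ f = 0) :
    ∃ k : A →ₗ[R] X, k ∘ₗ g = h :=
  ⟨(range f).liftQ h (range_le_ker_iff.mpr hh) ∘ₗ (hfg.linearEquivOfSurjective hg).symm,
    by ext; simp⟩

theorem Submodule.exists_subtype_comp_eq_of_mkQ_comp_eq_zero {f : X →ₗ[R] M}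
    (hf : N.mkQ ∘ₗ f = 0) : ∃ r : X →ₗ[R] N, N.subtype ∘ₗ r = f :=
  ⟨f.codRestrict N fun x => (Submodule.Quotient.mk_eq_zero N).mp congr($hf x),
    subtype_comp_codRestrict _ _ _⟩

theorem Submodule.mkQ_comp_subtype : N.mkQ ∘ₗ N.subtype = 0 :=
  (exact_subtype_mkQ N).linearMap_comp_eq_zero

variable {N} {ι : K →ₗ[R] P} {π : P →ₗ[R] A}

theorem exists_comp_eq_of_surjective_mkQ_comp (hexact : Function.Exact ι π)
    (hπ : Function.Surjective π) (hpure : Function.Surjective fun g : A →ₗ[R] M => N.mkQ ∘ₗ g)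
    (s : K →ₗ[R] N) (s' : P →ₗ[R] M) (hsq : N.subtype ∘ₗ s = s' ∘ₗ ι) :
    ∃ r : P →ₗ[R] N, r ∘ₗ ι = s := by
  have hs'ι : N.mkQ ∘ₗ s' ∘ₗ ι = 0 := by
    rw [← hsq, ← comp_assoc, N.mkQ_comp_subtype, zero_comp]
  obtain ⟨g, hg⟩ := hexact.exists_comp_eq_of_comp_eq_zero hπ (h := N.mkQ ∘ₗ s') hs'ι
  obtain ⟨g', rfl⟩ := hpure g
  obtain ⟨r, hr⟩ := N.exists_subtype_comp_eq_of_mkQ_comp_eq_zero (f := s' - g' ∘ₗ π) <| by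
    rw [comp_sub, ← comp_assoc, hg, sub_self]
  refine ⟨r, (cancel_left N.injective_subtype).mp ?_⟩
  rw [← comp_assoc, hr, sub_comp, comp_assoc, hexact.linearMap_comp_eq_zero, comp_zero,
    sub_zero, hsq]

theorem surjective_mkQ_comp_of_exists_comp_eq [Module.Projective R P]
    (hexact : Function.Exact ι π) (hπ : Function.Surjective π)
    (hlift : ∀ (s : K →ₗ[R] N) (s' : P →ₗ[R] M),
      N.subtype ∘ₗ s = s' ∘ₗ ι → ∃ r : P →ₗ[R] N, r ∘ₗ ι = s) :
    Function.Surjective fun g : A →ₗ[R] M => N.mkQ ∘ₗ g := by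
  intro g
  obtain ⟨s', hs'⟩ := Module.projective_lifting_property N.mkQ (g ∘ₗ π) N.mkQ_surjective
  obtain ⟨s, hs⟩ := N.exists_subtype_comp_eq_of_mkQ_comp_eq_zero (f := s' ∘ₗ ι) <| by
    rw [← comp_assoc, hs', comp_assoc, hexact.linearMap_comp_eq_zero, comp_zero]
  obtain ⟨r, hr⟩ := hlift s s' hs
  obtain ⟨g', hg'⟩ := hexact.exists_comp_eq_of_comp_eq_zero hπ (h := s' - N.subtype ∘ₗ r) <| by
    rw [sub_comp, comp_assoc, hr, hs, sub_self]
  refine ⟨g', (cancel_right hπ).mp ?_⟩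
  rw [comp_assoc, hg', comp_sub, hs', ← comp_assoc, N.mkQ_comp_subtype, zero_comp, sub_zero]

theorem sigma_pure_iff_lifting_general
    {R : Type u} [Ring R]
    {M : Type v} [AddCommGroup M] [Module R M] (N : Submodule R M)
    {ι : Type w}
    (A : ι → Type x) [∀ i, AddCommGroup (A i)] [∀ i, Module R (A i)]
    (K : ι → Type y) [∀ i, AddCommGroup (K i)] [∀ i, Module R (K i)]
    (P : ι → Type z) [∀ i, AddCommGroup (P i)] [∀ i, Module R (P i)]
    (ιA : ∀ i, K i →ₗ[R] P i) (πA : ∀ i, P i →ₗ[R] A i)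
    (_hproj : ∀ i, Module.Projective R (P i))
    (_hsurj : ∀ i, Function.Surjective (πA i))
    (_hexact : ∀ i, Function.Exact (ιA i) (πA i)) :
    (∀ i, Function.Surjective fun g : A i →ₗ[R] M => N.mkQ.comp g) ↔
      (∀ i (s : K i →ₗ[R] N) (s' : P i →ₗ[R] M),
        N.subtype.comp s = s'.comp (ιA i) →
          ∃ r : P i →ₗ[R] N, r.comp (ιA i) = s) :=
  forall_congr' fun i =>
    ⟨exists_comp_eq_of_surjective_mkQ_comp (_hexact i) (_hsurj i),
      surjective_mkQ_comp_of_exists_comp_eq (_hexact i) (_hsurj i)⟩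

theorem sigma_pure_iff_lifting
    {R : Type u} [Ring R]
    {M : Type v} [AddCommGroup M] [Module R M] (N : Submodule R M)
    {ι : Type w}
    (A : ι → Type x) [∀ i, AddCommGroup (A i)] [∀ i, Module R (A i)]
    (K : ι → Type y) [∀ i, AddCommGroup (K i)] [∀ i, Module R (K i)]
    (P : ι → Type z) [∀ i, AddCommGroup (P i)] [∀ i, Module R (P i)]
    (ιA : ∀ i, K i →ₗ[R] P i) (πA : ∀ i, P i →ₗ[R] A i)
    (_hproj : ∀ i, Module.Projective R (P i))
    (_hinj : ∀ i, Function.Injective (ιA i))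
    (_hsurj : ∀ i, Function.Surjective (πA i))
    (_hexact : ∀ i, Function.Exact (ιA i) (πA i)) :
    (∀ i, Function.Surjective fun g : A i →ₗ[R] M => N.mkQ.comp g) ↔
      (∀ i (s : K i →ₗ[R] N) (s' : P i →ₗ[R] M),
        N.subtype.comp s = s'.comp (ιA i) →
          ∃ r : P i →ₗ[R] N, r.comp (ιA i) = s) :=
  sigma_pure_iff_lifting_general N A K P ιA πA _hproj _hsurj _hexact
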